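/- arXiv:2201.12500 — 6 statements merged into one kernel-verified Lean document; each statement's English description precedes it below -/
import Mathlib

section
/- Suppose f ∈ H satisfies P₁f = 0 and f is orthogonal both to ker P₁ ∩ ran P₂ and to ker P₁ ∩ ker P₂ (so f lies in the part of the generic subspace of the two projections annihilated by P₁). Then for every r ∈ (0,1): V_D(f) = 2‖f‖² and V_R(f,r) = ((1+r)/(1−r))·‖f‖². Consequently, for every τ > 0 and f ≠ 0, V_R†(f,r)/V_D†(f) = ((rτ+1−r)/(τ+1))·((1+r)/(1−r)), which tends to 0 as τ → ∞ with r → 0. -/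
open scoped RealInnerProductSpace

noncomputable def VD {H : Type*} [NormedAddCommGroup H] [InnerProductSpace ℝ H]
    (P₁ P₂ : H →L[ℝ] H) (f : H) : ℝ :=
  ‖f‖ ^ 2
    + ∑' s : ℕ, ⟪f, ((P₁ * P₂) ^ s * P₁) f⟫
    + ∑' s : ℕ, ⟪f, ((P₁ * P₂) ^ (s + 1)) f⟫
    + ∑' s : ℕ, ⟪f, ((P₂ * P₁) ^ s * P₂) f⟫
    + ∑' s : ℕ, ⟪f, ((P₂ * P₁) ^ (s + 1)) f⟫

noncomputable def VR {H : Type*} [NormedAddCommGroup H] [InnerProductSpace ℝ H]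
    (P₁ P₂ : H →L[ℝ] H) (r : ℝ) (f : H) : ℝ :=
  ‖f‖ ^ 2 + 2 * ∑' t : ℕ, ⟪f, (((1 - r) • P₁ + r • P₂) ^ (t + 1)) f⟫

noncomputable def kOne (r : ℝ) : ℝ :=
  1 - r + r ^ 2 + Real.sqrt (r ^ 2 * (1 - r) ^ 2 + (1 - 2 * r) ^ 2)

noncomputable def kTwo (r : ℝ) : ℝ :=
  (1 - r + r ^ 2 + Real.sqrt (r ^ 2 * (1 - r) ^ 2 + (1 - 2 * r) ^ 2)) / (2 * r * (1 - r))

noncomputable def kappa (τ r : ℝ) : ℝ := (τ + 1) / (2 * (r * τ + 1 - r))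

noncomputable def VDdag {H : Type*} [NormedAddCommGroup H] [InnerProductSpace ℝ H]
    (P₁ P₂ : H →L[ℝ] H) (τ : ℝ) (f : H) : ℝ := ((1 + τ) / 2) * VD P₁ P₂ f

noncomputable def VRdag {H : Type*} [NormedAddCommGroup H] [InnerProductSpace ℝ H]
    (P₁ P₂ : H →L[ℝ] H) (r τ : ℝ) (f : H) : ℝ := (r * τ + 1 - r) * VR P₁ P₂ r f

open Filter Topology

/-!
Since `P₁ f = 0`, every term of `V_D(f)` vanishes except the series `∑ ⟪f, (P₂P₁)ˢ P₂ f⟫`, and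
`V_R(f)` is `‖f‖² + 2⟪f, v⟫` with `v = ∑ Qᵗ⁺¹ f`, `Q = (1 - r)P₁ + rP₂`. Both Neumann series
converge because `‖P₂P₁‖ = ‖P₁P₂‖ < 1` and `‖Q‖ < 1`, and their sums `u`, `v` satisfy the
fixed-point equations `u = P₂ f + P₂P₁ u`, `v = Q f + Q v`. These force
`u - f - P₁ u` and `v - r/(1-r) f - P₁ v` into `ker P₁ ∩ ker P₂`, which is orthogonal to `f`;
as `f ⟂ ran P₁` too, this gives `⟪f, u⟫ = ‖f‖²` and `⟪f, v⟫ = r/(1-r) ‖f‖²`.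
-/

section CStarRing

variable {E : Type*} [NormedRing E] [StarRing E] [CStarRing E]

lemma norm_mul_comm_of_isSelfAdjoint {a b : E} (ha : IsSelfAdjoint a) (hb : IsSelfAdjoint b) :
    ‖b * a‖ = ‖a * b‖ := by
  rw [← norm_star, star_mul, ha.star_eq, hb.star_eq]

lemma IsStarProjection.norm_smul_add_smul_lt_one [NormedAlgebra ℝ E] [StarModule ℝ E]
    {p q : E} (hp : IsStarProjection p) (hq : IsStarProjection q) (hpq : ‖p * q‖ < 1)
    {r : ℝ} (hr₀ : 0 < r) (hr₁ : r < 1) : ‖(1 - r) • p + r • q‖ < 1 := by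
  set a := (1 - r) • p + r • q
  have ha : IsSelfAdjoint a :=
    ((IsSelfAdjoint.all (1 - r)).smul hp.isSelfAdjoint).add
      ((IsSelfAdjoint.all r).smul hq.isSelfAdjoint)
  have hsq : a * a = (1 - r) ^ 2 • p + (r * (1 - r)) • (p * q + q * p) + r ^ 2 • q := by
    simp only [a, add_mul, mul_add, smul_mul_smul_comm, hp.isIdempotentElem.eq,
      hq.isIdempotentElem.eq]
    module
  have hr : 0 ≤ r * (1 - r) := by nlinarith
  have hbound : ‖a * a‖ ≤ (1 - r) ^ 2 + r * (1 - r) * (2 * ‖p * q‖) + r ^ 2 := by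
    rw [hsq]
    calc _ ≤ ‖(1 - r) ^ 2 • p‖ + ‖(r * (1 - r)) • (p * q + q * p)‖ + ‖r ^ 2 • q‖ :=
          norm_add₃_le
      _ ≤ (1 - r) ^ 2 * 1 + r * (1 - r) * (‖p * q‖ + ‖q * p‖) + r ^ 2 * 1 := by
          simp only [norm_smul, Real.norm_of_nonneg (sq_nonneg _), Real.norm_of_nonneg hr]
          gcongr
          exacts [hp.norm_le, norm_add_le _ _, hq.norm_le]
      _ = _ := by
          rw [norm_mul_comm_of_isSelfAdjoint hq.isSelfAdjoint hp.isSelfAdjoint]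
          ring
  have hsq_lt : ‖a‖ ^ 2 < 1 := by
    rw [← ha.norm_mul_self]
    nlinarith [mul_pos (mul_pos hr₀ (sub_pos.2 hr₁)) (sub_pos.2 hpq)]
  nlinarith [norm_nonneg a]

end CStarRing

section HilbertSpace

variable {H : Type*} [NormedAddCommGroup H] [InnerProductSpace ℝ H] [CompleteSpace H]

/-- The witness is `u = (1 - A)⁻¹ B g`. -/
lemma exists_tsum_inner_pow_mul_apply {A : H →L[ℝ] H} (hA : ‖A‖ < 1) (B : H →L[ℝ] H)
    (f g : H) : ∃ u : H, u = B g + A u ∧ ∑' s : ℕ, ⟪f, (A ^ s * B) g⟫ = ⟪f, u⟫ := by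
  have hsum : Summable (fun s : ℕ => A ^ s) := summable_geometric_of_norm_lt_one hA
  set R := ∑' s : ℕ, A ^ s
  have hR : R = 1 + A * R := by
    have := mul_neg_geom_series A hA
    rw [sub_mul, one_mul] at this
    exact sub_eq_iff_eq_add.mp this
  refine ⟨(R * B) g, ?_, ?_⟩
  · conv_lhs => rw [hR]
    simp [add_mul, mul_assoc]
  · have := ((innerSL ℝ f).comp (ContinuousLinearMap.apply ℝ H g)).map_tsum (hsum.mul_right B)
    simpa [hsum.tsum_mul_right] using this.symm

variable {P₁ P₂ : H →L[ℝ] H} {f : H}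

lemma inner_apply_eq_zero_of_apply_eq_zero (h1sa : IsSelfAdjoint P₁) (hf : P₁ f = 0) (y : H) :
    ⟪f, P₁ y⟫ = 0 := by
  rw [← h1sa.adjoint_eq, ContinuousLinearMap.adjoint_inner_right, hf, inner_zero_left]

lemma inner_eq_mul_norm_sq_of_apply_sub_eq_zero (h1sa : IsSelfAdjoint P₁) (h1idem : P₁ * P₁ = P₁)
    (hf : P₁ f = 0) (horth : ∀ g : H, P₁ g = 0 → P₂ g = 0 → ⟪f, g⟫ = 0) {w : H} {c : ℝ}
    (hw : P₂ (w - c • f - P₁ w) = 0) : ⟪f, w⟫ = c * ‖f‖ ^ 2 := by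
  have hP₁ : P₁ (w - c • f - P₁ w) = 0 := by
    simp [hf, ← mul_apply_eq_comp, h1idem]
  have h := horth _ hP₁ hw
  rw [inner_sub_right, inner_sub_right, real_inner_smul_right, real_inner_self_eq_norm_sq,
    inner_apply_eq_zero_of_apply_eq_zero h1sa hf] at h
  linarith

lemma VD_eq_two_mul_norm_sq (h1sa : IsSelfAdjoint P₁) (h1idem : P₁ * P₁ = P₁)
    (h2sa : IsSelfAdjoint P₂) (h2idem : P₂ * P₂ = P₂) (hnorm : ‖P₁ * P₂‖ < 1) (hf : P₁ f = 0)
    (horth : ∀ g : H, P₁ g = 0 → P₂ g = 0 → ⟪f, g⟫ = 0) :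
    VD P₁ P₂ f = 2 * ‖f‖ ^ 2 := by
  have h₁ (s : ℕ) : ⟪f, ((P₁ * P₂) ^ s * P₁) f⟫ = 0 := by
    rw [mul_apply_eq_comp, hf, map_zero, inner_zero_right]
  have h₂ (s : ℕ) : ⟪f, ((P₁ * P₂) ^ (s + 1)) f⟫ = 0 := by
    rw [pow_succ', mul_apply_eq_comp, mul_apply_eq_comp]
    exact inner_apply_eq_zero_of_apply_eq_zero h1sa hf _
  have h₄ (s : ℕ) : ⟪f, ((P₂ * P₁) ^ (s + 1)) f⟫ = 0 := by
    rw [pow_succ, mul_apply_eq_comp, mul_apply_eq_comp, hf, map_zero, map_zero, inner_zero_right]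
  have hA : ‖P₂ * P₁‖ < 1 := norm_mul_comm_of_isSelfAdjoint (E := H →L[ℝ] H) h2sa h1sa ▸ hnorm
  obtain ⟨u, hu, h₃⟩ := exists_tsum_inner_pow_mul_apply hA P₂ f f
  have hu₂ : u = P₂ (f + P₁ u) := by rwa [map_add, ← mul_apply_eq_comp]
  have hP₂u : P₂ u = u := by rw [hu₂, ← mul_apply_eq_comp, h2idem]
  have hu' : ⟪f, u⟫ = 1 * ‖f‖ ^ 2 := by
    refine inner_eq_mul_norm_sq_of_apply_sub_eq_zero h1sa h1idem hf horth ?_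
    rw [one_smul, map_sub, map_sub, hP₂u, sub_sub, ← map_add, ← hu₂, sub_self]
  rw [VD, tsum_congr h₁, tsum_congr h₂, tsum_congr h₄, h₃, hu', tsum_zero]
  ring

lemma VR_eq_mul_norm_sq (h1sa : IsSelfAdjoint P₁) (h1idem : P₁ * P₁ = P₁)
    (h2sa : IsSelfAdjoint P₂) (h2idem : P₂ * P₂ = P₂) (hnorm : ‖P₁ * P₂‖ < 1) (hf : P₁ f = 0)
    (horth : ∀ g : H, P₁ g = 0 → P₂ g = 0 → ⟪f, g⟫ = 0) {r : ℝ} (hr₀ : 0 < r) (hr₁ : r < 1) :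
    VR P₁ P₂ r f = ((1 + r) / (1 - r)) * ‖f‖ ^ 2 := by
  rw [VR]
  set Q := (1 - r) • P₁ + r • P₂
  have hQ : ‖Q‖ < 1 := IsStarProjection.norm_smul_add_smul_lt_one
    ⟨h1idem, h1sa⟩ ⟨h2idem, h2sa⟩ hnorm hr₀ hr₁
  obtain ⟨v, hv, hsum⟩ := exists_tsum_inner_pow_mul_apply hQ Q f f
  have hv₁ : v = (1 - r) • P₁ v + r • P₂ (f + v) := by
    calc v = Q (f + v) := by rwa [map_add]
      _ = _ := by simp [Q, hf]
  have hv₂ : P₂ v = (1 - r) • P₂ (P₁ v) + r • P₂ f + r • P₂ v := by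
    conv_lhs => rw [hv₁]
    rw [map_add, map_smul, map_smul, ← mul_apply_eq_comp P₂ P₂, h2idem, map_add, smul_add,
      add_assoc]
  have hr : 1 - r ≠ 0 := by linarith
  have hfv : ⟪f, v⟫ = r / (1 - r) * ‖f‖ ^ 2 := by
    refine inner_eq_mul_norm_sq_of_apply_sub_eq_zero h1sa h1idem hf horth ?_
    refine (smul_right_injective H hr) ?_
    simp only [map_sub, map_smul, smul_zero, smul_sub, smul_smul, mul_div_cancel₀ _ hr]
    linear_combination (norm := module) hv₂
  rw [tsum_congr fun t => by rw [pow_succ], hsum, hfv]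
  field_simp
  ring

end HilbertSpace

lemma tendsto_variance_ratio_atTop {ρ : ℝ → ℝ} (hρ : Tendsto ρ atTop (𝓝 0)) :
    Tendsto (fun τ => (ρ τ * τ + 1 - ρ τ) / (τ + 1) * ((1 + ρ τ) / (1 - ρ τ))) atTop (𝓝 0) := by
  have hinv : Tendsto (fun τ : ℝ => (τ + 1)⁻¹) atTop (𝓝 0) :=
    (tendsto_atTop_add_const_right _ 1 tendsto_id).inv_tendsto_atTop
  have hlim : Tendsto (fun τ => (ρ τ + (1 - 2 * ρ τ) * (τ + 1)⁻¹) * ((1 + ρ τ) / (1 - ρ τ)))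
      atTop (𝓝 ((0 + (1 - 2 * 0) * 0) * ((1 + 0) / (1 - 0)))) :=
    (hρ.add ((tendsto_const_nhds.sub (hρ.const_mul 2)).mul hinv)).mul
      ((tendsto_const_nhds.add hρ).div (tendsto_const_nhds.sub hρ) (by norm_num))
  rw [show ((0 : ℝ) + (1 - 2 * 0) * 0) * ((1 + 0) / (1 - 0)) = 0 by norm_num] at hlim
  refine hlim.congr' ?_
  filter_upwards [eventually_gt_atTop 0] with τ hτ
  -- `(ρτ + 1 - ρ) / (τ + 1) = ρ + (1 - 2ρ) / (τ + 1)`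
  field_simp
  ring

theorem stmt4_general {H : Type*} [NormedAddCommGroup H] [InnerProductSpace ℝ H] [CompleteSpace H]
    (P₁ P₂ : H →L[ℝ] H)
    (h1sa : IsSelfAdjoint P₁) (h1idem : P₁ * P₁ = P₁)
    (h2sa : IsSelfAdjoint P₂) (h2idem : P₂ * P₂ = P₂)
    (hnorm : ‖P₁ * P₂‖ < 1)
    (f : H) (hf : P₁ f = 0)
    (horth₂ : ∀ g : H, P₁ g = 0 → P₂ g = 0 → ⟪f, g⟫ = 0) :
    (∀ r ∈ Set.Ioo (0 : ℝ) 1,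
      VD P₁ P₂ f = 2 * ‖f‖ ^ 2 ∧ VR P₁ P₂ r f = ((1 + r) / (1 - r)) * ‖f‖ ^ 2) ∧
    (f ≠ 0 →
      (∀ r ∈ Set.Ioo (0 : ℝ) 1, ∀ τ : ℝ, 0 < τ →
        VRdag P₁ P₂ r τ f / VDdag P₁ P₂ τ f
          = ((r * τ + 1 - r) / (τ + 1)) * ((1 + r) / (1 - r))) ∧
      (∀ rf : ℝ → ℝ, (∀ τ : ℝ, rf τ ∈ Set.Ioo (0 : ℝ) 1) →
        Filter.Tendsto rf Filter.atTop (nhds 0) →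
        Filter.Tendsto (fun τ : ℝ => VRdag P₁ P₂ (rf τ) τ f / VDdag P₁ P₂ τ f)
          Filter.atTop (nhds 0))) := by
  have hVD := VD_eq_two_mul_norm_sq h1sa h1idem h2sa h2idem hnorm hf horth₂
  have hVR {r : ℝ} (hr : r ∈ Set.Ioo (0 : ℝ) 1) :=
    VR_eq_mul_norm_sq h1sa h1idem h2sa h2idem hnorm hf horth₂ hr.1 hr.2
  refine ⟨fun r hr => ⟨hVD, hVR hr⟩, fun hf₀ => ?_⟩
  have hratio : ∀ r ∈ Set.Ioo (0 : ℝ) 1, ∀ τ : ℝ, 0 < τ →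
      VRdag P₁ P₂ r τ f / VDdag P₁ P₂ τ f
        = ((r * τ + 1 - r) / (τ + 1)) * ((1 + r) / (1 - r)) := by
    intro r hr τ hτ
    have : 1 - r ≠ 0 := by linarith [hr.2]
    rw [VRdag, VDdag, hVD, hVR hr]
    field_simp [norm_ne_zero_iff.mpr hf₀]
    ring
  refine ⟨hratio, fun rf hrf hlim => (tendsto_variance_ratio_atTop hlim).congr' ?_⟩
  filter_upwards [eventually_gt_atTop 0] with τ hτ
  exact (hratio _ (hrf τ) τ hτ).symm

theorem stmt4 {H : Type*} [NormedAddCommGroup H] [InnerProductSpace ℝ H] [CompleteSpace H]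
    (P₁ P₂ : H →L[ℝ] H)
    (h1sa : IsSelfAdjoint P₁) (h1idem : P₁ * P₁ = P₁)
    (h2sa : IsSelfAdjoint P₂) (h2idem : P₂ * P₂ = P₂)
    (hnorm : ‖P₁ * P₂‖ < 1)
    (f : H) (hf : P₁ f = 0)
    (horth₁ : ∀ g : H, P₁ g = 0 → g ∈ LinearMap.range (P₂ : H →ₗ[ℝ] H) → ⟪f, g⟫ = 0)
    (horth₂ : ∀ g : H, P₁ g = 0 → P₂ g = 0 → ⟪f, g⟫ = 0) :
    (∀ r ∈ Set.Ioo (0 : ℝ) 1,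
      VD P₁ P₂ f = 2 * ‖f‖ ^ 2 ∧ VR P₁ P₂ r f = ((1 + r) / (1 - r)) * ‖f‖ ^ 2) ∧
    (f ≠ 0 →
      (∀ r ∈ Set.Ioo (0 : ℝ) 1, ∀ τ : ℝ, 0 < τ →
        VRdag P₁ P₂ r τ f / VDdag P₁ P₂ τ f
          = ((r * τ + 1 - r) / (τ + 1)) * ((1 + r) / (1 - r))) ∧
      (∀ rf : ℝ → ℝ, (∀ τ : ℝ, rf τ ∈ Set.Ioo (0 : ℝ) 1) →
        Filter.Tendsto rf Filter.atTop (nhds 0) →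
        Filter.Tendsto (fun τ : ℝ => VRdag P₁ P₂ (rf τ) τ f / VDdag P₁ P₂ τ f)
          Filter.atTop (nhds 0))) :=
  stmt4_general P₁ P₂ h1sa h1idem h2sa h2idem hnorm f hf horth₂
end

section
/- Let m : ℕ → ℕ be such that m̄ := liminf_{t→∞} m(t)/(2t) is finite. Then sup over f ∈ H with ‖f‖ = 1 of limsup_{t→∞} ⟨f, A^{m(t)} f⟩^{1/(2t)} equals ‖A‖^{m̄}. -/
open scoped RealInnerProductSpace
open Filter Topology

section Aux

variable {H : Type*} [NormedAddCommGroup H] [InnerProductSpace ℝ H] [CompleteSpace H]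

private lemma aux_symm (A : H →L[ℝ] H) (hA : IsSelfAdjoint A) (g h : H) :
    ⟪A g, h⟫ = ⟪g, A h⟫ := by
  conv_lhs => rw [← hA.adjoint_eq]
  exact ContinuousLinearMap.adjoint_inner_left A h g

private lemma aux_formCS (A : H →L[ℝ] H) (hA : IsSelfAdjoint A)
    (hpos : ∀ f : H, 0 ≤ ⟪f, A f⟫) (g h : H) :
    ⟪g, A h⟫ ^ 2 ≤ ⟪g, A g⟫ * ⟪h, A h⟫ := by
  have key : ∀ t : ℝ, 0 ≤ ⟪h, A h⟫ * (t * t) + (2 * ⟪g, A h⟫) * t + ⟪g, A g⟫ := by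
    intro t
    have h0 := hpos (g + t • h)
    have e1 : A (g + t • h) = A g + t • A h := by
      rw [map_add, map_smul]
    have e2 : ⟪g + t • h, A (g + t • h)⟫
        = ⟪g, A g⟫ + t * ⟪g, A h⟫ + (t * ⟪h, A g⟫ + t * (t * ⟪h, A h⟫)) := by
      rw [e1]
      simp only [inner_add_left, inner_add_right, real_inner_smul_left,
        real_inner_smul_right]
      ring
    have e3 : ⟪h, A g⟫ = ⟪g, A h⟫ := by
      rw [← aux_symm A hA h g, real_inner_comm]
    rw [e2, e3] at h0
    nlinarith [h0]
  have hd := discrim_le_zero key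
  rw [discrim] at hd
  nlinarith [hd]

private lemma aux_shift (A : H →L[ℝ] H) (hA : IsSelfAdjoint A) (f : H) :
    ∀ j k : ℕ, ⟪f, (A ^ (j + k)) f⟫ = ⟪(A ^ j) f, (A ^ k) f⟫ := by
  intro j
  induction j with
  | zero => intro k; simp
  | succ n ih =>
    intro k
    have h1 : n + 1 + k = n + (k + 1) := by omega
    rw [h1, ih (k + 1)]
    have h2 : (A ^ (k + 1)) f = A ((A ^ k) f) := by
      rw [pow_succ']; rfl
    have h3 : (A ^ (n + 1)) f = A ((A ^ n) f) := by
      rw [pow_succ']; rfl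
    rw [h2, h3, ← aux_symm A hA ((A ^ n) f) ((A ^ k) f)]

private lemma aux_pow_nonneg (A : H →L[ℝ] H) (hA : IsSelfAdjoint A)
    (hpos : ∀ f : H, 0 ≤ ⟪f, A f⟫) (f : H) (n : ℕ) : 0 ≤ ⟪f, (A ^ n) f⟫ := by
  rcases Nat.even_or_odd n with ⟨k, hk⟩ | ⟨k, hk⟩
  · subst hk
    rw [aux_shift A hA f k k]
    exact real_inner_self_nonneg
  · subst hk
    rw [show 2 * k + 1 = k + (k + 1) from by omega, aux_shift A hA f k (k + 1),
      show (A ^ (k + 1)) f = A ((A ^ k) f) from by rw [pow_succ']; rfl]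
    exact hpos _

private lemma aux_logconvex (A : H →L[ℝ] H) (hA : IsSelfAdjoint A)
    (hpos : ∀ f : H, 0 ≤ ⟪f, A f⟫) (f : H) (n : ℕ) :
    ⟪f, (A ^ (n + 1)) f⟫ ^ 2 ≤ ⟪f, (A ^ n) f⟫ * ⟪f, (A ^ (n + 2)) f⟫ := by
  rcases Nat.even_or_odd n with ⟨k, hk⟩ | ⟨k, hk⟩
  · subst hk
    rw [show k + k + 1 = k + (k + 1) from by omega, aux_shift A hA f k (k + 1),
      aux_shift A hA f k k,
      show k + k + 2 = (k + 1) + (k + 1) from by omega,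
      aux_shift A hA f (k + 1) (k + 1)]
    have := real_inner_mul_inner_self_le ((A ^ k) f) ((A ^ (k + 1)) f)
    nlinarith [this]
  · subst hk
    rw [show 2 * k + 1 + 1 = k + (k + 2) from by omega, aux_shift A hA f k (k + 2),
      show 2 * k + 1 + 2 = (k + 1) + (k + 2) from by omega,
      aux_shift A hA f (k + 1) (k + 2),
      show 2 * k + 1 = k + (k + 1) from by omega, aux_shift A hA f k (k + 1)]
    have e1 : (A ^ (k + 2)) f = A ((A ^ (k + 1)) f) := by rw [pow_succ']; rfl
    have e2 : (A ^ (k + 1)) f = A ((A ^ k) f) := by rw [pow_succ']; rfl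
    rw [e1]
    nth_rewrite 2 [e2]
    exact aux_formCS A hA hpos ((A ^ k) f) ((A ^ (k + 1)) f)

private lemma aux_geo (A : H →L[ℝ] H) (hA : IsSelfAdjoint A)
    (hpos : ∀ f : H, 0 ≤ ⟪f, A f⟫) (f : H) (hf : ‖f‖ = 1)
    (hc : 0 < ⟪f, A f⟫) (n : ℕ) : ⟪f, A f⟫ ^ n ≤ ⟪f, (A ^ n) f⟫ := by
  have key : ∀ n : ℕ, ⟪f, A f⟫ ^ n ≤ ⟪f, (A ^ n) f⟫ ∧
      ⟪f, A f⟫ * ⟪f, (A ^ n) f⟫ ≤ ⟪f, (A ^ (n + 1)) f⟫ := by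
    intro n
    induction n with
    | zero =>
      constructor
      · simp [real_inner_self_eq_norm_sq, hf]
      · simp [real_inner_self_eq_norm_sq, hf]
    | succ n ih =>
      obtain ⟨h1, h2⟩ := ih
      have hfirst : ⟪f, A f⟫ ^ (n + 1) ≤ ⟪f, (A ^ (n + 1)) f⟫ := by
        calc ⟪f, A f⟫ ^ (n + 1) = ⟪f, A f⟫ * ⟪f, A f⟫ ^ n := by ring
          _ ≤ ⟪f, A f⟫ * ⟪f, (A ^ n) f⟫ := by
              exact mul_le_mul_of_nonneg_left h1 hc.le
          _ ≤ ⟪f, (A ^ (n + 1)) f⟫ := h2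
      refine ⟨hfirst, ?_⟩
      have hposn1 : 0 < ⟪f, (A ^ (n + 1)) f⟫ :=
        lt_of_lt_of_le (pow_pos hc (n + 1)) hfirst
      have hls := aux_logconvex A hA hpos f n
      have hn2 : 0 ≤ ⟪f, (A ^ (n + 2)) f⟫ := aux_pow_nonneg A hA hpos f (n + 2)
      have h3 : (⟪f, A f⟫ * ⟪f, (A ^ (n + 1)) f⟫) * ⟪f, (A ^ (n + 1)) f⟫
          ≤ ⟪f, (A ^ (n + 2)) f⟫ * ⟪f, (A ^ (n + 1)) f⟫ := by
        nlinarith [mul_le_mul_of_nonneg_left hls hc.le,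
          mul_le_mul_of_nonneg_right h2 hn2]
      exact le_of_mul_le_mul_right h3 hposn1
  exact (key n).1

private lemma aux_limsup_rpow (c : ℝ) (hc0 : 0 < c) (hc1 : c ≤ 1) (x : ℕ → ℝ)
    (hx0 : ∀ t, 0 ≤ x t) (hbdd : IsBoundedUnder (· ≤ ·) atTop x) :
    limsup (fun t => c ^ x t) atTop = c ^ (liminf x atTop) := by
  have hxbb : IsBoundedUnder (· ≥ ·) atTop x :=
    Filter.isBoundedUnder_of ⟨0, fun t => hx0 t⟩
  have hvb : IsBoundedUnder (· ≤ ·) atTop (fun t => c ^ x t) :=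
    Filter.isBoundedUnder_of ⟨1, fun t => Real.rpow_le_one hc0.le hc1 (hx0 t)⟩
  have hvb0 : IsBoundedUnder (· ≥ ·) atTop (fun t => c ^ x t) :=
    Filter.isBoundedUnder_of ⟨0, fun t => (Real.rpow_pos_of_pos hc0 _).le⟩
  set L := liminf x atTop with hL
  have hupper : ∀ ε : ℝ, 0 < ε → limsup (fun t => c ^ x t) atTop ≤ c ^ (L - ε) := by
    intro ε hε
    have hev : ∀ᶠ t in atTop, L - ε < x t :=
      eventually_lt_of_lt_liminf (by linarith) hxbb
    exact limsup_le_of_le hvb0.isCoboundedUnder_le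
      (hev.mono fun t ht => Real.rpow_le_rpow_of_exponent_ge hc0 hc1 ht.le)
  have hlower : ∀ ε : ℝ, 0 < ε → c ^ (L + ε) ≤ limsup (fun t => c ^ x t) atTop := by
    intro ε hε
    have hfreq : ∃ᶠ t in atTop, x t < L + ε :=
      frequently_lt_of_liminf_lt hbdd.isCoboundedUnder_ge (by linarith)
    exact le_limsup_of_frequently_le
      (hfreq.mono fun t ht => Real.rpow_le_rpow_of_exponent_ge hc0 hc1 ht.le) hvb
  have hcont : ContinuousAt (fun y : ℝ => c ^ y) L :=
    Real.continuousAt_const_rpow (ne_of_gt hc0)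
  have htend0 : Tendsto (fun n : ℕ => 1 / ((n : ℝ) + 1)) atTop (𝓝 0) :=
    tendsto_one_div_add_atTop_nhds_zero_nat
  apply le_antisymm
  · have htt : Tendsto (fun n : ℕ => c ^ (L - 1 / ((n : ℝ) + 1))) atTop (𝓝 (c ^ L)) := by
      have : Tendsto (fun n : ℕ => L - 1 / ((n : ℝ) + 1)) atTop (𝓝 L) := by
        simpa using tendsto_const_nhds.sub htend0
      exact (hcont.tendsto.comp this)
    exact ge_of_tendsto htt
      (Eventually.of_forall fun n => hupper _ (by positivity))
  · have htt : Tendsto (fun n : ℕ => c ^ (L + 1 / ((n : ℝ) + 1))) atTop (𝓝 (c ^ L)) := by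
      have : Tendsto (fun n : ℕ => L + 1 / ((n : ℝ) + 1)) atTop (𝓝 L) := by
        simpa using tendsto_const_nhds.add htend0
      exact (hcont.tendsto.comp this)
    exact le_of_tendsto htt
      (Eventually.of_forall fun n => hlower _ (by positivity))

end Aux

theorem stmt11 {H : Type*} [NormedAddCommGroup H] [InnerProductSpace ℝ H] [CompleteSpace H]
    [Nontrivial H]
    (A : H →L[ℝ] H) (hA : IsSelfAdjoint A)
    (hpos : ∀ f : H, 0 ≤ ⟪f, A f⟫) (hcontr : ∀ f : H, ⟪f, A f⟫ ≤ ‖f‖ ^ 2)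
    (hAnorm : 0 < ‖A‖)
    (m : ℕ → ℕ)
    (hfin : Filter.IsBoundedUnder (· ≤ ·) Filter.atTop (fun t : ℕ => (m t : ℝ) / (2 * t))) :
    (⨆ f : {f : H // ‖f‖ = 1},
        Filter.limsup
          (fun t : ℕ => (⟪(f : H), (A ^ m t) (f : H)⟫) ^ ((1 : ℝ) / (2 * t)))
          Filter.atTop)
      = ‖A‖ ^ (Filter.liminf (fun t : ℕ => (m t : ℝ) / (2 * t)) Filter.atTop) := by
  classical
  obtain ⟨f0, hf0⟩ := exists_norm_eq H (zero_le_one)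
  haveI : Nonempty {f : H // ‖f‖ = 1} := ⟨⟨f0, hf0⟩⟩
  set x : ℕ → ℝ := fun t : ℕ => (m t : ℝ) / (2 * t) with hxdef
  set L := liminf x atTop with hLdef
  have hx0 : ∀ t, 0 ≤ x t := fun t => div_nonneg (Nat.cast_nonneg _) (by positivity)
  have hL0 : 0 ≤ L :=
    le_liminf_of_le hfin.isCoboundedUnder_ge (Eventually.of_forall hx0)
  -- key inequality : ‖A g‖ ^ 2 ≤ ‖A‖ * ⟪g, A g⟫
  have hK : ∀ g : H, ‖A g‖ ^ 2 ≤ ‖A‖ * ⟪g, A g⟫ := by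
    intro g
    have h1 : ⟪g, A (A g)⟫ ^ 2 ≤ ⟪g, A g⟫ * ⟪A g, A (A g)⟫ :=
      aux_formCS A hA hpos g (A g)
    have h2 : ⟪g, A (A g)⟫ = ‖A g‖ ^ 2 := by
      rw [← aux_symm A hA g (A g), real_inner_self_eq_norm_sq]
    have h3 : ⟪A g, A (A g)⟫ ≤ ‖A g‖ * (‖A‖ * ‖A g‖) := by
      refine (real_inner_le_norm _ _).trans ?_
      exact mul_le_mul_of_nonneg_left (A.le_opNorm (A g)) (norm_nonneg _)
    rcases eq_or_lt_of_le (norm_nonneg (A g)) with h0 | h0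
    · rw [← h0]
      have := mul_nonneg hAnorm.le (hpos g)
      nlinarith
    · have h4 : ‖A g‖ ^ 2 * ‖A g‖ ^ 2 ≤ (‖A‖ * ⟪g, A g⟫) * ‖A g‖ ^ 2 := by
        nlinarith [h1, h2, h3, hpos g, real_inner_self_nonneg (x := A g)]
      exact le_of_mul_le_mul_right h4 (by positivity)
  have hA1 : ‖A‖ ≤ 1 := by
    have hb : ∀ g : H, ‖A g‖ ≤ Real.sqrt ‖A‖ * ‖g‖ := by
      intro g
      have h1 : ‖A g‖ ^ 2 ≤ ‖A‖ * ‖g‖ ^ 2 := by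
        refine (hK g).trans ?_
        exact mul_le_mul_of_nonneg_left (hcontr g) hAnorm.le
      calc ‖A g‖ = Real.sqrt (‖A g‖ ^ 2) := (Real.sqrt_sq (norm_nonneg _)).symm
        _ ≤ Real.sqrt (‖A‖ * ‖g‖ ^ 2) := Real.sqrt_le_sqrt h1
        _ = Real.sqrt ‖A‖ * ‖g‖ := by
            rw [Real.sqrt_mul hAnorm.le, Real.sqrt_sq (norm_nonneg _)]
    have h2 : ‖A‖ ≤ Real.sqrt ‖A‖ :=
      A.opNorm_le_bound (Real.sqrt_nonneg _) hb
    nlinarith [Real.sq_sqrt hAnorm.le, h2, hAnorm]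
  -- upper bound on each inner product
  have haup : ∀ (f : H), ‖f‖ = 1 → ∀ n : ℕ, ⟪f, (A ^ n) f⟫ ≤ ‖A‖ ^ n := by
    intro f hf n
    rcases Nat.eq_zero_or_pos n with hn | hn
    · subst hn
      simp [real_inner_self_eq_norm_sq, hf]
    · calc ⟪f, (A ^ n) f⟫ ≤ ‖f‖ * ‖(A ^ n) f‖ := real_inner_le_norm _ _
        _ ≤ ‖f‖ * (‖A ^ n‖ * ‖f‖) :=
            mul_le_mul_of_nonneg_left ((A ^ n).le_opNorm f) (norm_nonneg _)
        _ ≤ ‖A‖ ^ n := by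
            rw [hf]
            simpa using norm_pow_le' A hn
  -- pointwise upper bound
  have hub : ∀ f : {f : H // ‖f‖ = 1},
      limsup (fun t : ℕ => (⟪(f : H), (A ^ m t) (f : H)⟫) ^ ((1 : ℝ) / (2 * t))) atTop
        ≤ ‖A‖ ^ L := by
    intro f
    have hle : ∀ t : ℕ, (⟪(f : H), (A ^ m t) (f : H)⟫) ^ ((1 : ℝ) / (2 * t))
        ≤ ‖A‖ ^ x t := by
      intro t
      have e0 : (0 : ℝ) ≤ 1 / (2 * (t : ℝ)) := by positivity
      calc (⟪(f : H), (A ^ m t) (f : H)⟫) ^ ((1 : ℝ) / (2 * t))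
          ≤ ((‖A‖ ^ m t : ℝ)) ^ ((1 : ℝ) / (2 * t)) :=
            Real.rpow_le_rpow (aux_pow_nonneg A hA hpos _ _) (haup _ f.2 _) e0
        _ = ‖A‖ ^ ((m t : ℝ) * ((1 : ℝ) / (2 * t))) := by
            rw [← Real.rpow_natCast ‖A‖ (m t), ← Real.rpow_mul hAnorm.le]
        _ = ‖A‖ ^ x t := by rw [mul_one_div]
    have hcob : IsCoboundedUnder (· ≤ ·) atTop
        (fun t : ℕ => (⟪(f : H), (A ^ m t) (f : H)⟫) ^ ((1 : ℝ) / (2 * t))) := by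
      exact IsBoundedUnder.isCoboundedUnder_le
        (Filter.isBoundedUnder_of
          ⟨0, fun t => Real.rpow_nonneg (aux_pow_nonneg A hA hpos _ _) _⟩)
    have hbd : IsBoundedUnder (· ≤ ·) atTop (fun t : ℕ => ‖A‖ ^ x t) :=
      Filter.isBoundedUnder_of ⟨1, fun t => Real.rpow_le_one hAnorm.le hA1 (hx0 t)⟩
    calc limsup (fun t : ℕ => (⟪(f : H), (A ^ m t) (f : H)⟫) ^ ((1 : ℝ) / (2 * t))) atTop
        ≤ limsup (fun t : ℕ => ‖A‖ ^ x t) atTop :=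
          limsup_le_limsup (Eventually.of_forall hle) hcob hbd
      _ = ‖A‖ ^ L := aux_limsup_rpow ‖A‖ hAnorm hA1 x hx0 hfin
  have hSub : (⨆ f : {f : H // ‖f‖ = 1},
      limsup (fun t : ℕ => (⟪(f : H), (A ^ m t) (f : H)⟫) ^ ((1 : ℝ) / (2 * t))) atTop)
        ≤ ‖A‖ ^ L := ciSup_le hub
  have hbddS : BddAbove (Set.range fun f : {f : H // ‖f‖ = 1} =>
      limsup (fun t : ℕ => (⟪(f : H), (A ^ m t) (f : H)⟫) ^ ((1 : ℝ) / (2 * t))) atTop) := by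
    refine ⟨‖A‖ ^ L, ?_⟩
    rintro y ⟨f, rfl⟩
    exact hub f
  -- pointwise lower bound
  have hlow : ∀ f : {f : H // ‖f‖ = 1}, 0 < ⟪(f : H), A (f : H)⟫ →
      (⟪(f : H), A (f : H)⟫) ^ L ≤
        limsup (fun t : ℕ => (⟪(f : H), (A ^ m t) (f : H)⟫) ^ ((1 : ℝ) / (2 * t))) atTop := by
    intro f hc
    have hc1 : ⟪(f : H), A (f : H)⟫ ≤ 1 := by
      have := hcontr (f : H)
      rwa [f.2, one_pow] at this
    have hle : ∀ t : ℕ, (⟪(f : H), A (f : H)⟫) ^ x t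
        ≤ (⟪(f : H), (A ^ m t) (f : H)⟫) ^ ((1 : ℝ) / (2 * t)) := by
      intro t
      have h1 : (⟪(f : H), A (f : H)⟫) ^ (m t) ≤ ⟪(f : H), (A ^ m t) (f : H)⟫ :=
        aux_geo A hA hpos (f : H) f.2 hc (m t)
      calc (⟪(f : H), A (f : H)⟫) ^ x t
          = ((⟪(f : H), A (f : H)⟫ ^ (m t) : ℝ)) ^ ((1 : ℝ) / (2 * t)) := by
            rw [← Real.rpow_natCast (⟪(f : H), A (f : H)⟫) (m t), ← Real.rpow_mul hc.le,
              mul_one_div]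
        _ ≤ _ := Real.rpow_le_rpow (pow_nonneg hc.le _) h1 (by positivity)
    have hcob : IsCoboundedUnder (· ≤ ·) atTop
        (fun t : ℕ => (⟪(f : H), A (f : H)⟫) ^ x t) := by
      exact IsBoundedUnder.isCoboundedUnder_le
        (Filter.isBoundedUnder_of ⟨0, fun t => (Real.rpow_pos_of_pos hc _).le⟩)
    have hbd : IsBoundedUnder (· ≤ ·) atTop
        (fun t : ℕ => (⟪(f : H), (A ^ m t) (f : H)⟫) ^ ((1 : ℝ) / (2 * t))) := by
      refine Filter.isBoundedUnder_of ⟨1, fun t => ?_⟩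
      have ha1 : ⟪(f : H), (A ^ m t) (f : H)⟫ ≤ 1 := by
        refine (haup _ f.2 (m t)).trans ?_
        exact pow_le_one₀ hAnorm.le hA1
      exact Real.rpow_le_one (aux_pow_nonneg A hA hpos _ _) ha1 (by positivity)
    calc (⟪(f : H), A (f : H)⟫) ^ L
        = limsup (fun t : ℕ => (⟪(f : H), A (f : H)⟫) ^ x t) atTop :=
          (aux_limsup_rpow _ hc hc1 x hx0 hfin).symm
      _ ≤ limsup (fun t : ℕ => (⟪(f : H), (A ^ m t) (f : H)⟫) ^ ((1 : ℝ) / (2 * t))) atTop :=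
          limsup_le_limsup (Eventually.of_forall hle) hcob hbd
  -- existence of near-maximizers
  have hexists : ∀ ε : ℝ, 0 < ε → ε < ‖A‖ →
      ∃ f : H, ‖f‖ = 1 ∧ (‖A‖ - ε) ^ 2 / ‖A‖ ≤ ⟪f, A f⟫ := by
    intro ε hε1 hε2
    have hno : ¬ (‖A‖ ≤ ‖A‖ - ε) := by linarith
    have hx : ∃ g : H, (‖A‖ - ε) * ‖g‖ < ‖A g‖ := by
      by_contra hcon
      push_neg at hcon
      exact hno (A.opNorm_le_bound (by linarith) fun g => (hcon g))
    obtain ⟨g, hg⟩ := hx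
    have hgne : g ≠ 0 := by
      rintro rfl
      rw [norm_zero, map_zero, norm_zero, mul_zero] at hg
      exact lt_irrefl _ hg
    have hgn : 0 < ‖g‖ := norm_pos_iff.mpr hgne
    refine ⟨‖g‖⁻¹ • g, ?_, ?_⟩
    · rw [norm_smul, norm_inv, norm_norm, inv_mul_cancel₀ hgn.ne']
    · have hAu : ‖A (‖g‖⁻¹ • g)‖ = ‖g‖⁻¹ * ‖A g‖ := by
        rw [map_smul, norm_smul, norm_inv, norm_norm]
      have hAu2 : ‖A‖ - ε < ‖A (‖g‖⁻¹ • g)‖ := by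
        rw [hAu, ← div_eq_inv_mul]
        exact (lt_div_iff₀ hgn).mpr hg
      have hKu := hK (‖g‖⁻¹ • g)
      have h5 : (‖A‖ - ε) ^ 2 ≤ ‖A‖ * ⟪‖g‖⁻¹ • g, A (‖g‖⁻¹ • g)⟫ := by
        nlinarith [hAu2, hKu, norm_nonneg (A (‖g‖⁻¹ • g)), hε2]
      rw [div_le_iff₀ hAnorm]
      linarith [h5]
  -- conclusion
  apply le_antisymm hSub
  have hbk : ∀ k : ℕ, ((‖A‖ - ‖A‖ / ((k : ℝ) + 2)) ^ 2 / ‖A‖) ^ L ≤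
      (⨆ f : {f : H // ‖f‖ = 1},
        limsup (fun t : ℕ => (⟪(f : H), (A ^ m t) (f : H)⟫) ^ ((1 : ℝ) / (2 * t))) atTop) := by
    intro k
    set ε : ℝ := ‖A‖ / ((k : ℝ) + 2) with hεdef
    have hε1 : 0 < ε := by positivity
    have hε2 : ε < ‖A‖ := by
      rw [hεdef, div_lt_iff₀ (by positivity)]
      nlinarith [hAnorm]
    obtain ⟨f, hf, hcf⟩ := hexists ε hε1 hε2
    have hb0 : 0 < (‖A‖ - ε) ^ 2 / ‖A‖ :=
      div_pos (pow_pos (by linarith) 2) hAnorm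
    have hcpos : 0 < ⟪f, A f⟫ := lt_of_lt_of_le hb0 hcf
    have h2 : ((‖A‖ - ε) ^ 2 / ‖A‖) ^ L ≤ (⟪f, A f⟫ : ℝ) ^ L :=
      Real.rpow_le_rpow hb0.le hcf hL0
    refine h2.trans ((hlow ⟨f, hf⟩ hcpos).trans ?_)
    exact le_ciSup hbddS ⟨f, hf⟩
  have htt : Tendsto (fun k : ℕ => ((‖A‖ - ‖A‖ / ((k : ℝ) + 2)) ^ 2 / ‖A‖) ^ L) atTop
      (𝓝 (‖A‖ ^ L)) := by
    have h1 : Tendsto (fun k : ℕ => ‖A‖ / ((k : ℝ) + 2)) atTop (𝓝 0) := by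
      apply Tendsto.div_atTop (tendsto_const_nhds)
      exact tendsto_atTop_add_const_right atTop 2 tendsto_natCast_atTop_atTop
    have h2 : Tendsto (fun k : ℕ => (‖A‖ - ‖A‖ / ((k : ℝ) + 2)) ^ 2 / ‖A‖) atTop
        (𝓝 ‖A‖) := by
      have h3 : Tendsto (fun k : ℕ => (‖A‖ - ‖A‖ / ((k : ℝ) + 2)) ^ 2 / ‖A‖) atTop
          (𝓝 ((‖A‖ - 0) ^ 2 / ‖A‖)) :=
        ((tendsto_const_nhds.sub h1).pow 2).div_const ‖A‖
      have h4 : (‖A‖ - 0) ^ 2 / ‖A‖ = ‖A‖ := by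
        field_simp
        ring
      rwa [h4] at h3
    have hcont : ContinuousAt (fun y : ℝ => y ^ L) ‖A‖ :=
      Real.continuousAt_rpow_const ‖A‖ L (Or.inl hAnorm.ne')
    exact hcont.tendsto.comp h2
  exact le_of_tendsto htt (Eventually.of_forall hbk)
end

section
/- For all c ∈ [0,1], r ∈ (0,1), and τ > 0: ((1 + √((1−2r)² + 4r(1−r)c²))/2)^{1/(rτ+1−r)} ≥ c^{2/(1+τ)}, with equality only if c = 1. (This says the computation-time-adjusted convergence rate of the random-scan Gibbs chain, ρ_R(r)^{1/(rτ+1−r)} with ρ_R(r) = (1+√((1−2r)²+4r(1−r)‖C‖²))/2, is never smaller than the adjusted deterministic-scan rate ‖C‖^{2/(1+τ)}.) -/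
/-!
Write `x = c²`, `ρ = ρ_R(r)` and `α = (rτ + 1 - r)/(1 + τ)`; after raising both sides to the
power `rτ + 1 - r` the claim is `x ^ α < ρ` for `x < 1`. The rate `ρ` is the larger root of
`ρ (1 - ρ) = r (1 - r) (1 - x)`, so `ρ ≥ max r (1 - r)`, while `α` is a convex combination of
`r` and `1 - r`, so `α ≥ min r (1 - r)`; hence `α ρ > r (1 - r)`. Bernoulli's inequality gives
`x ^ α ≤ 1 - α (1 - x)`, and `1 - α (1 - x) < ρ` is exactly `r (1 - r) (1 - x) < α ρ (1 - x)`.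
-/

noncomputable def randomScanRate (r x : ℝ) : ℝ :=
  (1 + √((1 - 2 * r) ^ 2 + 4 * r * (1 - r) * x)) / 2

lemma min_le_div_one_add (a b : ℝ) {τ : ℝ} (hτ : 0 ≤ τ) : min a b ≤ (a * τ + b) / (1 + τ) := by
  rw [le_div_iff₀ (by linarith)]
  nlinarith [min_le_left a b, min_le_right a b]

section RandomScanRate

variable {r x : ℝ}

lemma randomScanRate_mul_one_sub (hr₀ : 0 ≤ r) (hr₁ : r ≤ 1) (hx : 0 ≤ x) :
    randomScanRate r x * (1 - randomScanRate r x) = r * (1 - r) * (1 - x) := by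
  have hdisc : 0 ≤ (1 - 2 * r) ^ 2 + 4 * r * (1 - r) * x := by
    have := mul_nonneg (mul_nonneg hr₀ (sub_nonneg.2 hr₁)) hx
    nlinarith [sq_nonneg (1 - 2 * r)]
  unfold randomScanRate
  linear_combination (-1 / 4 : ℝ) * Real.sq_sqrt hdisc

lemma randomScanRate_one (r : ℝ) : randomScanRate r 1 = 1 := by
  norm_num [randomScanRate, show (1 - 2 * r) ^ 2 + 4 * r * (1 - r) = 1 by ring]

lemma max_lt_randomScanRate (hr₀ : 0 < r) (hr₁ : r < 1) (hx : 0 < x) :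
    max r (1 - r) < randomScanRate r x := by
  have habs : |1 - 2 * r| < √((1 - 2 * r) ^ 2 + 4 * r * (1 - r) * x) := by
    rw [← Real.sqrt_sq_eq_abs]
    have := mul_pos (mul_pos hr₀ (sub_pos.2 hr₁)) hx
    exact Real.sqrt_lt_sqrt (sq_nonneg _) (by linarith)
  unfold randomScanRate
  rw [max_lt_iff]
  constructor <;> linarith [le_abs_self (1 - 2 * r), neg_abs_le (1 - 2 * r)]

lemma rpow_lt_randomScanRate {τ : ℝ} (hr₀ : 0 < r) (hr₁ : r < 1) (hx₀ : 0 ≤ x) (hx₁ : x < 1)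
    (hτ : 0 ≤ τ) : x ^ ((r * τ + 1 - r) / (1 + τ)) < randomScanRate r x := by
  set α := (r * τ + 1 - r) / (1 + τ)
  set ρ := randomScanRate r x
  have hα : min r (1 - r) ≤ α := by
    simpa only [α, add_sub_assoc] using min_le_div_one_add r (1 - r) hτ
  have hα₀ : 0 < α := (lt_min hr₀ (sub_pos.2 hr₁)).trans_le hα
  have hα₁ : α ≤ 1 := by
    rw [div_le_one (by linarith)]
    nlinarith
  have hρ : 0 < ρ := by unfold ρ randomScanRate; positivity
  rcases hx₀.eq_or_lt with rfl | hx₀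
  · rwa [Real.zero_rpow hα₀.ne']
  have hbernoulli : x ^ α ≤ 1 - α * (1 - x) := by
    have := rpow_one_add_le_one_add_mul_self (s := x - 1) (by linarith) hα₀.le hα₁
    rw [add_sub_cancel] at this
    linarith
  have hαρ : r * (1 - r) < α * ρ := by
    rw [← min_mul_max]
    exact mul_lt_mul' hα (max_lt_randomScanRate hr₀ hr₁ hx₀) (hr₀.le.trans (le_max_left _ _)) hα₀
  have hρ_lt : ρ * (1 - ρ) < ρ * (α * (1 - x)) := by
    rw [randomScanRate_mul_one_sub hr₀.le hr₁.le hx₀.le]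
    nlinarith [mul_lt_mul_of_pos_right hαρ (sub_pos.2 hx₁)]
  linarith [lt_of_mul_lt_mul_left hρ_lt hρ.le]

end RandomScanRate

lemma rpow_lt_randomScanRate_rpow {c r τ : ℝ} (hc₀ : 0 ≤ c) (hc₁ : c < 1) (hr₀ : 0 < r)
    (hr₁ : r < 1) (hτ : 0 ≤ τ) :
    c ^ ((2 : ℝ) / (1 + τ)) < randomScanRate r (c ^ 2) ^ ((1 : ℝ) / (r * τ + 1 - r)) := by
  have hcost : 0 < r * τ + 1 - r := by nlinarith
  have hexp : c ^ ((2 : ℝ) / (1 + τ)) =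
      ((c ^ 2) ^ ((r * τ + 1 - r) / (1 + τ))) ^ ((1 : ℝ) / (r * τ + 1 - r)) := by
    rw [← Real.rpow_natCast c 2, ← Real.rpow_mul hc₀, ← Real.rpow_mul hc₀]
    congr 1
    push_cast
    rw [mul_assoc, div_mul_div_comm, mul_one, mul_comm (1 + τ), ← div_div, div_self hcost.ne',
      mul_one_div]
  rw [hexp]
  exact Real.rpow_lt_rpow (by positivity)
    (rpow_lt_randomScanRate hr₀ hr₁ (by positivity) (by nlinarith) hτ) (by positivity)

theorem stmt13 (c r τ : ℝ) (hc : c ∈ Set.Icc (0 : ℝ) 1) (hr : r ∈ Set.Ioo (0 : ℝ) 1)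
    (hτ : 0 < τ) :
    c ^ ((2 : ℝ) / (1 + τ)) ≤
      ((1 + Real.sqrt ((1 - 2 * r) ^ 2 + 4 * r * (1 - r) * c ^ 2)) / 2)
        ^ ((1 : ℝ) / (r * τ + 1 - r)) ∧
    (((1 + Real.sqrt ((1 - 2 * r) ^ 2 + 4 * r * (1 - r) * c ^ 2)) / 2)
        ^ ((1 : ℝ) / (r * τ + 1 - r)) = c ^ ((2 : ℝ) / (1 + τ)) → c = 1) := by
  obtain ⟨hc₀, hc₁⟩ := hc
  change c ^ _ ≤ randomScanRate r (c ^ 2) ^ _ ∧ (randomScanRate r (c ^ 2) ^ _ = c ^ _ → c = 1)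
  rcases hc₁.eq_or_lt with rfl | hc₁
  · simp [randomScanRate_one]
  · have hlt := rpow_lt_randomScanRate_rpow hc₀ hc₁ hr.1 hr.2 hτ.le
    exact ⟨hlt.le, fun heq => absurd heq hlt.ne'⟩
end

section
/- Let P₁, P₂ be orthogonal projections on a real Hilbert space H with ran P₁ ∩ ran P₂ = {0}. Then ‖(P₁P₂ + P₂P₁)/2‖ = ‖P₁P₂‖·(1 + ‖P₁P₂‖)/2. (In the Gibbs-sampler interpretation, the L² convergence rate of the random sequence scan Gibbs chain, whose Markov operator is (P₁P₂+P₂P₁)/2, equals ‖C‖(1+‖C‖)/2 where ‖C‖ = ‖P₁P₂‖.) -/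
/-!
Write `c = ‖P₁P₂‖` and `T = (P₁P₂ + P₂P₁)/2`, so that `⟪T x, x⟫ = ⟪P₁ x, P₂ x⟫` and, `T` being
self-adjoint, `‖T‖` is the supremum of `|⟪P₁ x, P₂ x⟫|` over unit vectors.

Upper bound: for a unit vector `x` put `a = ‖P₁ x‖`, `b = ‖P₂ x‖` and `t = ⟪P₁ x, P₂ x⟫`. Writing
`t = ⟪P₁ x, P₁P₂ (P₂ x)⟫` gives `|t| ≤ c a b`, while `⟪P₁ x, x⟫ = a²`, `⟪P₂ x, x⟫ = b²` and the
Cauchy–Schwarz inequality for the components of `P₁ x`, `P₂ x` orthogonal to `x` give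
`(t - a²b²)² ≤ a²(1 - a²) b²(1 - b²)`. Together these force `2ab ≤ 1 + c`, hence
`|t| ≤ c(1 + c)/2`.

Lower bound: for `z ∈ ran P₂`, testing `T` on `‖P₁ z‖ z + ‖z‖ P₁ z` yields
`‖P₁ z‖ (‖z‖ + ‖P₁ z‖) ≤ 2‖T‖ ‖z‖²`, so `‖P₁ z‖ ≤ g ‖z‖` for the root `g ≥ 0` of `g(1 + g) = 2‖T‖`.
Hence `c ≤ g` and `c(1 + c) ≤ 2‖T‖`.
-/

open RealInnerProductSpace

section

variable {H : Type*} [NormedAddCommGroup H] [InnerProductSpace ℝ H]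

theorem sq_inner_sub_inner_mul_inner_le {x : H} (hx : ‖x‖ = 1) (u v : H) :
    (⟪u, v⟫ - ⟪u, x⟫ * ⟪v, x⟫) ^ 2 ≤ (‖u‖ ^ 2 - ⟪u, x⟫ ^ 2) * (‖v‖ ^ 2 - ⟪v, x⟫ ^ 2) := by
  have hxx : ⟪x, x⟫ = 1 := by rw [real_inner_self_eq_norm_sq, hx, one_pow]
  have key := real_inner_mul_inner_self_le (u - ⟪u, x⟫ • x) (v - ⟪v, x⟫ • x)
  simp only [inner_sub_left, inner_sub_right, real_inner_smul_left, real_inner_smul_right, hxx,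
    real_inner_comm x u, real_inner_comm x v, ← real_inner_self_eq_norm_sq] at key ⊢
  linear_combination key

theorem abs_le_mul_one_add_div_two {a b c t : ℝ} (ha : 0 ≤ a) (ha1 : a ≤ 1)
    (hb1 : b ≤ 1) (hc : 0 ≤ c) (ht : |t| ≤ c * (a * b))
    (hgram : (t - a ^ 2 * b ^ 2) ^ 2 ≤ (a ^ 2 - a ^ 4) * (b ^ 2 - b ^ 4)) :
    |t| ≤ c * (1 + c) / 2 := by
  have hab : 2 * (a * b) ≤ 1 + c := by
    by_contra! h
    have hp : 0 < a * b := by nlinarith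
    have h1 : a * b * (1 - a * b) < a ^ 2 * b ^ 2 - t := by
      nlinarith [le_abs_self t]
    have h2 : (a * b) ^ 2 * (1 - a * b) ^ 2 < (a ^ 2 * b ^ 2 - t) ^ 2 := by
      have : 0 ≤ a * b * (1 - a * b) := mul_nonneg hp.le (by nlinarith)
      nlinarith
    have h3 : (1 - a * b) ^ 2 < (1 - a ^ 2) * (1 - b ^ 2) := by
      have : (a * b) ^ 2 * (1 - a * b) ^ 2 < (a * b) ^ 2 * ((1 - a ^ 2) * (1 - b ^ 2)) := by
        nlinarith
      exact lt_of_mul_lt_mul_left this (by positivity)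
    nlinarith [sq_nonneg (a - b)]
  nlinarith

section CompleteSpace

variable [CompleteSpace H]

theorem IsSelfAdjoint.norm_le_of_forall_abs_inner_le {T : H →L[ℝ] H} (hT : IsSelfAdjoint T)
    {M : ℝ} (hM0 : 0 ≤ M) (hM : ∀ x : H, ‖x‖ = 1 → |⟪T x, x⟫| ≤ M) : ‖T‖ ≤ M := by
  rw [T.norm_eq_iSup_rayleighQuotient hT.isSymmetric]
  refine ciSup_le fun x => ?_
  rcases eq_or_ne x 0 with rfl | hx
  · simpa using hM0
  have hunit : ‖(‖x‖⁻¹ : ℝ) • x‖ = 1 := norm_smul_inv_norm hx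
  rw [← T.rayleigh_smul x (inv_ne_zero (norm_ne_zero_iff.mpr hx))]
  simpa [ContinuousLinearMap.rayleighQuotient, T.reApplyInnerSelf_apply, hunit] using hM _ hunit

section StarProjection

variable {P Q : H →L[ℝ] H}

theorem IsStarProjection.apply_apply (hP : IsStarProjection P) (x : H) : P (P x) = P x :=
  congr($(hP.isIdempotentElem.eq) x)

theorem IsStarProjection.inner_apply_left (hP : IsStarProjection P) (x y : H) :
    ⟪P x, y⟫ = ⟪x, P y⟫ :=
  hP.isSelfAdjoint.isSymmetric x y

theorem IsStarProjection.inner_apply_self (hP : IsStarProjection P) (x : H) :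
    ⟪P x, x⟫ = ‖P x‖ ^ 2 := by
  calc ⟪P x, x⟫ = ⟪P (P x), x⟫ := by rw [hP.apply_apply]
    _ = ⟪P x, P x⟫ := hP.inner_apply_left (P x) x
    _ = ‖P x‖ ^ 2 := real_inner_self_eq_norm_sq _

theorem IsStarProjection.norm_apply_le (hP : IsStarProjection P) (x : H) : ‖P x‖ ≤ ‖x‖ := by
  have h := hP.inner_apply_self x ▸ real_inner_le_norm (P x) x
  rw [sq] at h
  rcases (norm_nonneg (P x)).eq_or_lt with h0 | h0
  · exact h0 ▸ norm_nonneg x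
  · exact le_of_mul_le_mul_left h h0

theorem IsStarProjection.abs_inner_apply_apply_le (hP : IsStarProjection P)
    (hQ : IsStarProjection Q) {x : H} (hx : ‖x‖ = 1) :
    |⟪P x, Q x⟫| ≤ ‖P * Q‖ * (1 + ‖P * Q‖) / 2 := by
  have hPx : ‖P x‖ ≤ 1 := hx ▸ hP.norm_apply_le x
  have hQx : ‖Q x‖ ≤ 1 := hx ▸ hQ.norm_apply_le x
  have hcomp : |⟪P x, Q x⟫| ≤ ‖P * Q‖ * (‖P x‖ * ‖Q x‖) := by
    have h : ⟪P x, Q x⟫ = ⟪P x, (P * Q) (Q x)⟫ :=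
      calc ⟪P x, Q x⟫ = ⟪P (P x), Q x⟫ := by rw [hP.apply_apply]
        _ = ⟪P x, P (Q (Q x))⟫ := by rw [hQ.apply_apply, hP.inner_apply_left]
    calc |⟪P x, Q x⟫| ≤ ‖P x‖ * ‖(P * Q) (Q x)‖ := h ▸ abs_real_inner_le_norm _ _
      _ ≤ ‖P x‖ * (‖P * Q‖ * ‖Q x‖) := by gcongr; exact (P * Q).le_opNorm _
      _ = ‖P * Q‖ * (‖P x‖ * ‖Q x‖) := by ring
  have hgram := sq_inner_sub_inner_mul_inner_le hx (P x) (Q x)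
  rw [hP.inner_apply_self, hQ.inner_apply_self] at hgram
  exact abs_le_mul_one_add_div_two (norm_nonneg _) hPx hQx (norm_nonneg _) hcomp
    (hgram.trans_eq (by ring))

theorem IsStarProjection.norm_apply_mul_add_le (hP : IsStarProjection P)
    (hQ : IsStarProjection Q) {M : ℝ} (hM : ∀ y, ⟪P y, Q y⟫ ≤ M * ‖y‖ ^ 2) {z : H}
    (hz : Q z = z) : ‖P z‖ * (‖z‖ + ‖P z‖) ≤ 2 * M * ‖z‖ ^ 2 := by
  have hPz : P (P z) = P z := hP.apply_apply z
  have hzz : ⟪P z, z⟫ = ‖P z‖ ^ 2 := hP.inner_apply_self z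
  have hQPz : ⟪P z, Q (P z)⟫ = ‖Q (P z)‖ ^ 2 := by
    rw [real_inner_comm]; exact hQ.inner_apply_self (P z)
  have hMz : ‖P z‖ ^ 2 ≤ M * ‖z‖ ^ 2 := by simpa only [hz, hzz] using hM z
  rcases (norm_nonneg (P z)).eq_or_lt with hm | hm
  · rw [← hm] at hMz ⊢
    nlinarith
  have hcs : ‖P z‖ ^ 2 ≤ ‖Q (P z)‖ * ‖z‖ :=
    calc ‖P z‖ ^ 2 = ⟪Q (P z), z⟫ := by rw [hQ.inner_apply_left, hz, hzz]
      _ ≤ ‖Q (P z)‖ * ‖z‖ := real_inner_le_norm _ _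
  -- test vector `y`, proportional to `z / ‖z‖ + P z / ‖P z‖`
  set y := ‖P z‖ • z + ‖z‖ • P z
  have hinner : ⟪P y, Q y⟫ = (‖P z‖ + ‖z‖) * (‖P z‖ ^ 3 + ‖z‖ * ‖Q (P z)‖ ^ 2) := by
    simp only [y, map_add, map_smul, hPz, hz, inner_add_left, inner_add_right,
      real_inner_smul_left, real_inner_smul_right, hzz, hQPz]
    ring
  have hnorm : ‖y‖ ^ 2 = 2 * ‖P z‖ ^ 2 * ‖z‖ * (‖z‖ + ‖P z‖) := by
    rw [norm_add_sq_real, norm_smul, norm_smul, real_inner_smul_left, real_inner_smul_right,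
      real_inner_comm, hzz, Real.norm_of_nonneg hm.le, Real.norm_of_nonneg (norm_nonneg z)]
    ring
  have hy := hM y
  rw [hinner, hnorm] at hy
  have hcs_sq : ‖P z‖ ^ 4 ≤ ‖z‖ ^ 2 * ‖Q (P z)‖ ^ 2 := by nlinarith
  have key : ‖P z‖ ^ 2 * (‖P z‖ + ‖z‖) * (‖P z‖ * (‖z‖ + ‖P z‖))
      ≤ ‖P z‖ ^ 2 * (‖P z‖ + ‖z‖) * (2 * M * ‖z‖ ^ 2) := by
    linear_combination mul_le_mul_of_nonneg_left hy (norm_nonneg z) +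
      mul_le_mul_of_nonneg_left hcs_sq (by positivity : 0 ≤ ‖P z‖ + ‖z‖)
  exact le_of_mul_le_mul_left key (by positivity)

theorem IsStarProjection.norm_mul_mul_one_add_le (hP : IsStarProjection P)
    (hQ : IsStarProjection Q) {M : ℝ} (hM0 : 0 ≤ M) (hM : ∀ y, ⟪P y, Q y⟫ ≤ M * ‖y‖ ^ 2) :
    ‖P * Q‖ * (1 + ‖P * Q‖) ≤ 2 * M := by
  set g := (√(1 + 8 * M) - 1) / 2
  have hg0 : 0 ≤ g := by
    have : 1 ≤ √(1 + 8 * M) := Real.one_le_sqrt.mpr (by linarith)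
    simp only [g]; linarith
  have hg : g * (1 + g) = 2 * M := by
    have := Real.sq_sqrt (show 0 ≤ 1 + 8 * M by linarith)
    simp only [g]; linear_combination this / 4
  have hle : ‖P * Q‖ ≤ g := by
    refine (P * Q).opNorm_le_bound hg0 fun x => ?_
    have h := hP.norm_apply_mul_add_le hQ hM (hQ.apply_apply x)
    calc ‖(P * Q) x‖ ≤ g * ‖Q x‖ := by
          change ‖P (Q x)‖ ≤ _
          nlinarith [norm_nonneg (P (Q x)), norm_nonneg (Q x), mul_nonneg hg0 (norm_nonneg (Q x))]
      _ ≤ g * ‖x‖ := by gcongr; exact hQ.norm_apply_le x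
  calc ‖P * Q‖ * (1 + ‖P * Q‖) ≤ g * (1 + g) := by gcongr
    _ = 2 * M := hg

end StarProjection

end CompleteSpace

end

theorem stmt15_general {H : Type*} [NormedAddCommGroup H] [InnerProductSpace ℝ H] [CompleteSpace H]
    (P₁ P₂ : H →L[ℝ] H)
    (h1sa : IsSelfAdjoint P₁) (h1idem : P₁ * P₁ = P₁)
    (h2sa : IsSelfAdjoint P₂) (h2idem : P₂ * P₂ = P₂) :
    ‖(2 : ℝ)⁻¹ • (P₁ * P₂ + P₂ * P₁)‖ = ‖P₁ * P₂‖ * (1 + ‖P₁ * P₂‖) / 2 := by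
  have hP₁ : IsStarProjection P₁ := ⟨h1idem, h1sa⟩
  have hP₂ : IsStarProjection P₂ := ⟨h2idem, h2sa⟩
  set T := (2 : ℝ)⁻¹ • (P₁ * P₂ + P₂ * P₁)
  have hT : ∀ y, ⟪T y, y⟫ = ⟪P₁ y, P₂ y⟫ := fun y => by
    change ⟪(2 : ℝ)⁻¹ • (P₁ (P₂ y) + P₂ (P₁ y)), y⟫ = _
    rw [real_inner_smul_left, inner_add_left, hP₁.inner_apply_left (P₂ y),
      hP₂.inner_apply_left (P₁ y), real_inner_comm (P₁ y) (P₂ y)]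
    ring
  have hTsa : IsSelfAdjoint T := by
    refine .smul (.all _) ?_
    simpa only [star_mul, h1sa.star_eq, h2sa.star_eq] using IsSelfAdjoint.add_star_self (P₁ * P₂)
  refine le_antisymm (hTsa.norm_le_of_forall_abs_inner_le (by positivity) fun x hx => ?_) ?_
  · exact hT x ▸ hP₁.abs_inner_apply_apply_le hP₂ hx
  · have hM y : ⟪P₁ y, P₂ y⟫ ≤ ‖T‖ * ‖y‖ ^ 2 :=
      calc ⟪P₁ y, P₂ y⟫ = ⟪T y, y⟫ := (hT y).symm
        _ ≤ ‖T y‖ * ‖y‖ := real_inner_le_norm _ _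
        _ ≤ ‖T‖ * ‖y‖ * ‖y‖ := by gcongr; exact T.le_opNorm y
        _ = ‖T‖ * ‖y‖ ^ 2 := by ring
    linarith [hP₁.norm_mul_mul_one_add_le hP₂ (norm_nonneg T) hM]

theorem stmt15 {H : Type*} [NormedAddCommGroup H] [InnerProductSpace ℝ H] [CompleteSpace H]
    (P₁ P₂ : H →L[ℝ] H)
    (h1sa : IsSelfAdjoint P₁) (h1idem : P₁ * P₁ = P₁)
    (h2sa : IsSelfAdjoint P₂) (h2idem : P₂ * P₂ = P₂)
    (hranges : LinearMap.range (P₁ : H →ₗ[ℝ] H) ⊓ LinearMap.range (P₂ : H →ₗ[ℝ] H) = ⊥) :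
    ‖(2 : ℝ)⁻¹ • (P₁ * P₂ + P₂ * P₁)‖ = ‖P₁ * P₂‖ * (1 + ‖P₁ * P₂‖) / 2 :=
  stmt15_general P₁ P₂ h1sa h1idem h2sa h2idem
end

section
/- For every f ∈ H: 0 ≤ V_R(f, 1/2) − ‖f‖² and V_R(f, 1/2) − ‖f‖² = 2·(V_D(f) − ‖f‖²). -/
open scoped RealInnerProductSpace

/-!
Let `q = (P₁ + P₂) / 2`. The correction `VD f - ‖f‖²` is `⟪f, S f⟫`, where `S` is the sum of all
nonempty alternating words in `P₁` and `P₂`. Splitting off the first letter of each word and using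
idempotence gives `(P₁ + P₂) S = 2 S - (P₁ + P₂)`, i.e. `(1 - q) S = q`. Since
`‖q²‖ ≤ (1 + ‖P₁P₂‖) / 2 < 1`, the series `∑ qⁿ` converges and inverts `1 - q`, so `S = ∑ qⁿ⁺¹`,
which is half the correction `VR f (1/2) - ‖f‖²`. Nonnegativity holds termwise, since every power
of the positive operator `q` is positive.
-/

theorem add_mul_eq_two_mul_sub_of_word_relations {R : Type*} [Ring R] {p₁ p₂ a b c d : R}
    (h₁ : IsIdempotentElem p₁) (h₂ : IsIdempotentElem p₂)
    (hb : b = p₁ * c) (hd : d = p₂ * a) (ha : a = p₁ + p₁ * d) (hc : c = p₂ + p₂ * b) :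
    (p₁ + p₂) * (a + b + c + d) = 2 * (a + b + c + d) - (p₁ + p₂) := by
  have h₁a : p₁ * a = a := by rw [ha, mul_add, ← mul_assoc, h₁.eq]
  have h₁b : p₁ * b = b := by rw [hb, ← mul_assoc, h₁.eq]
  have h₂c : p₂ * c = c := by rw [hc, mul_add, ← mul_assoc, h₂.eq]
  have h₂d : p₂ * d = d := by rw [hd, ← mul_assoc, h₂.eq]
  have h₁d : p₁ * d = a - p₁ := by rw [ha]; abel
  have h₂b : p₂ * b = c - p₂ := by rw [hc]; abel
  simp only [add_mul, mul_add, h₁a, h₁b, h₂c, h₂d, h₁d, h₂b, ← hb, ← hd]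
  noncomm_ring

section TopologicalRing
variable {R : Type*} [Ring R] [TopologicalSpace R] [IsTopologicalRing R] [T2Space R]

noncomputable def oddWordSum (a b : R) : R := ∑' n : ℕ, (a * b) ^ n * a

noncomputable def evenWordSum (a b : R) : R := ∑' n : ℕ, (a * b) ^ (n + 1)

theorem evenWordSum_eq_mul_oddWordSum {a b : R} (hba : Summable fun n : ℕ => (b * a) ^ n) :
    evenWordSum a b = a * oddWordSum b a := by
  rw [oddWordSum, ← (hba.mul_right b).tsum_mul_left]
  refine tsum_congr fun n => ?_
  rw [← mul_assoc, ← mul_pow_mul, mul_assoc, ← pow_succ]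

theorem oddWordSum_eq_add_mul_evenWordSum {a b : R} (hab : Summable fun n : ℕ => (a * b) ^ n)
    (hba : Summable fun n : ℕ => (b * a) ^ n) :
    oddWordSum a b = a + a * evenWordSum b a := by
  rw [oddWordSum, (hab.mul_right a).tsum_eq_zero_add, evenWordSum,
    ← ((summable_nat_add_iff 1).mpr hba).tsum_mul_left]
  simp only [pow_zero, one_mul, mul_pow_mul]

noncomputable def scanSum (a b : R) : R :=
  oddWordSum a b + evenWordSum a b + oddWordSum b a + evenWordSum b a

theorem IsIdempotentElem.add_mul_scanSum {a b : R} (ha : IsIdempotentElem a)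
    (hb : IsIdempotentElem b) (hab : Summable fun n : ℕ => (a * b) ^ n)
    (hba : Summable fun n : ℕ => (b * a) ^ n) :
    (a + b) * scanSum a b = 2 * scanSum a b - (a + b) :=
  add_mul_eq_two_mul_sub_of_word_relations ha hb (evenWordSum_eq_mul_oddWordSum hba)
    (evenWordSum_eq_mul_oddWordSum hab) (oddWordSum_eq_add_mul_evenWordSum hab hba)
    (oddWordSum_eq_add_mul_evenWordSum hba hab)

theorem eq_tsum_pow_succ_of_one_sub_mul_eq {q s : R} (hq : Summable (q ^ ·))
    (hs : (1 - q) * s = q) : s = ∑' n : ℕ, q ^ (n + 1) := by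
  calc s = (∑' n : ℕ, q ^ n) * (1 - q) * s := by rw [hq.tsum_pow_mul_one_sub, one_mul]
    _ = ∑' n : ℕ, q ^ (n + 1) := by
      rw [mul_assoc, hs, ← hq.tsum_mul_right]
      simp only [pow_succ]

end TopologicalRing

theorem summable_pow_of_norm_mul_self_lt_one {R : Type*} [NormedRing R] [HasSummableGeomSeries R]
    {q : R} (hq : ‖q * q‖ < 1) : Summable (q ^ ·) := by
  have heven : Summable fun k : ℕ => q ^ (2 * k) := by
    simpa only [pow_mul, sq] using summable_geometric_of_norm_lt_one hq
  exact heven.even_add_odd (by simpa only [pow_succ] using heven.mul_right q)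

theorem IsSelfAdjoint.norm_mul_comm {R : Type*} [NormedRing R] [StarRing R] [NormedStarGroup R]
    {a b : R} (ha : IsSelfAdjoint a) (hb : IsSelfAdjoint b) : ‖b * a‖ = ‖a * b‖ := by
  rw [← norm_star, star_mul, ha.star_eq, hb.star_eq]

theorem IsStarProjection.norm_add_mul_self_lt_four {R : Type*} [NormedRing R] [StarRing R]
    [CStarRing R] {p₁ p₂ : R} (h₁ : IsStarProjection p₁) (h₂ : IsStarProjection p₂)
    (h₁₂ : ‖p₁ * p₂‖ < 1) : ‖(p₁ + p₂) * (p₁ + p₂)‖ < 4 := by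
  have hsq : (p₁ + p₂) * (p₁ + p₂) = p₁ + p₁ * p₂ + p₂ * p₁ + p₂ := by
    rw [add_mul, mul_add, mul_add, h₁.isIdempotentElem.eq, h₂.isIdempotentElem.eq]; abel
  have h₂₁ : ‖p₂ * p₁‖ = ‖p₁ * p₂‖ := h₁.isSelfAdjoint.norm_mul_comm h₂.isSelfAdjoint
  calc ‖(p₁ + p₂) * (p₁ + p₂)‖ ≤ ‖p₁‖ + ‖p₁ * p₂‖ + ‖p₂ * p₁‖ + ‖p₂‖ := hsq ▸ norm_add₄_le
    _ < 4 := by linarith [h₁.norm_le, h₂.norm_le]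

namespace ContinuousLinearMap
variable {𝕜 E : Type*} [RCLike 𝕜] [NormedAddCommGroup E] [InnerProductSpace 𝕜 E] [CompleteSpace E]

theorem IsPositive.pow {T : E →L[𝕜] E} (hT : T.IsPositive) : ∀ n : ℕ, (T ^ n).IsPositive
  | 0 => isPositive_one
  | 1 => by rwa [pow_one]
  | n + 2 => by
    have h := (IsPositive.pow hT n).conj_adjoint T
    rwa [hT.isSelfAdjoint.adjoint_eq, ← mul_def, ← mul_def, ← pow_succ, ← pow_succ'] at h

end ContinuousLinearMap

open ContinuousLinearMap

section ScanVariance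
variable {H : Type*} [NormedAddCommGroup H] [InnerProductSpace ℝ H]

theorem tsum_inner_apply {F : ℕ → H →L[ℝ] H} (hF : Summable F) (f : H) :
    ∑' n, ⟪f, F n f⟫ = ⟪f, (∑' n, F n) f⟫ :=
  (((innerSL ℝ f).comp (apply ℝ H f)).map_tsum hF).symm

theorem VD_sub_norm_sq {P₁ P₂ : H →L[ℝ] H} (h₁₂ : Summable fun n : ℕ => (P₁ * P₂) ^ n)
    (h₂₁ : Summable fun n : ℕ => (P₂ * P₁) ^ n) (f : H) :
    VD P₁ P₂ f - ‖f‖ ^ 2 = ⟪f, scanSum P₁ P₂ f⟫ := by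
  simp only [VD, scanSum, oddWordSum, evenWordSum, add_apply, inner_add_right,
    tsum_inner_apply (h₁₂.mul_right P₁), tsum_inner_apply (h₂₁.mul_right P₂),
    tsum_inner_apply ((summable_nat_add_iff (f := fun n => (P₁ * P₂) ^ n) 1).mpr h₁₂),
    tsum_inner_apply ((summable_nat_add_iff (f := fun n => (P₂ * P₁) ^ n) 1).mpr h₂₁)]
  ring

theorem VR_half_sub_norm_sq (P₁ P₂ : H →L[ℝ] H) (f : H) :
    VR P₁ P₂ (1 / 2) f - ‖f‖ ^ 2 = 2 * ∑' n : ℕ, ⟪f, (((2⁻¹ : ℝ) • (P₁ + P₂)) ^ (n + 1)) f⟫ := by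
  rw [VR, add_sub_cancel_left]
  norm_num [smul_add]

end ScanVariance

theorem stmt16 {H : Type*} [NormedAddCommGroup H] [InnerProductSpace ℝ H] [CompleteSpace H]
    (P₁ P₂ : H →L[ℝ] H)
    (h1sa : IsSelfAdjoint P₁) (h1idem : P₁ * P₁ = P₁)
    (h2sa : IsSelfAdjoint P₂) (h2idem : P₂ * P₂ = P₂)
    (hnorm : ‖P₁ * P₂‖ < 1) (f : H) :
    0 ≤ VR P₁ P₂ (1 / 2) f - ‖f‖ ^ 2 ∧
    VR P₁ P₂ (1 / 2) f - ‖f‖ ^ 2 = 2 * (VD P₁ P₂ f - ‖f‖ ^ 2) := by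
  have hp₁ : IsStarProjection P₁ := ⟨h1idem, h1sa⟩
  have hp₂ : IsStarProjection P₂ := ⟨h2idem, h2sa⟩
  have h₁₂ := summable_geometric_of_norm_lt_one hnorm
  have h₂₁ := summable_geometric_of_norm_lt_one ((h1sa.norm_mul_comm h2sa).trans_lt hnorm)
  set q : H →L[ℝ] H := (2⁻¹ : ℝ) • (P₁ + P₂) with hq_def
  have hq : Summable (q ^ ·) := by
    refine summable_pow_of_norm_mul_self_lt_one ?_
    calc ‖q * q‖ = 4⁻¹ * ‖(P₁ + P₂) * (P₁ + P₂)‖ := by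
          rw [hq_def, smul_mul_smul_comm, norm_smul]; norm_num
      _ < 1 := by linarith [hp₁.norm_add_mul_self_lt_four hp₂ hnorm]
  have hS : scanSum P₁ P₂ = ∑' n : ℕ, q ^ (n + 1) := by
    refine eq_tsum_pow_succ_of_one_sub_mul_eq hq ?_
    rw [sub_mul, one_mul, smul_mul_assoc,
      hp₁.isIdempotentElem.add_mul_scanSum hp₂.isIdempotentElem h₁₂ h₂₁, two_mul]
    module
  have hq_pos : q.IsPositive :=
    ((IsPositive.of_isStarProjection hp₁).add (.of_isStarProjection hp₂)).smul_of_nonneg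
      (by norm_num)
  have hT : Summable fun n : ℕ => q ^ (n + 1) := (summable_nat_add_iff (f := (q ^ ·)) 1).mpr hq
  rw [VR_half_sub_norm_sq, VD_sub_norm_sq h₁₂ h₂₁, hS, ← tsum_inner_apply hT]
  exact ⟨mul_nonneg zero_le_two (tsum_nonneg fun n => (hq_pos.pow _).inner_nonneg_right f), rfl⟩
end

section
/- Assume ‖P₁P₂‖ < 1 and let r ∈ (0,1). Then the operators I − P₁P₂, I − P₂P₁, and I − ((1−r)P₁ + rP₂) are invertible in the Banach algebra of bounded operators on H, and for every f ∈ H: V_D(f) = ⟨f, [I + (I−P₁P₂)⁻¹(P₁ + P₁P₂) + (I−P₂P₁)⁻¹(P₂ + P₂P₁)] f⟩ and V_R(f,r) = ⟨f, [2(I − (1−r)P₁ − rP₂)⁻¹ − I] f⟩. -/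
open scoped RealInnerProductSpace

lemma aux_tsum {H : Type*} [NormedAddCommGroup H] [InnerProductSpace ℝ H] [CompleteSpace H]
    (A : H →L[ℝ] H) (hA : ‖A‖ < 1) (f g : H) :
    ∑' s : ℕ, ⟪f, (A ^ s) g⟫ = ⟪f, (Ring.inverse (1 - A)) g⟫ := by
  have h := hasSum_geom_series_inverse A hA
  have h2 := h.mapL ((innerSL ℝ f).comp (ContinuousLinearMap.apply ℝ H g))
  simpa using h2.tsum_eq

set_option maxHeartbeats 1000000 in
set_option synthInstance.maxHeartbeats 400000 in
lemma aux_Qnorm {H : Type*} [NormedAddCommGroup H] [InnerProductSpace ℝ H] [CompleteSpace H]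
    (P₁ P₂ : H →L[ℝ] H)
    (h1sa : IsSelfAdjoint P₁) (h1idem : P₁ * P₁ = P₁)
    (h2sa : IsSelfAdjoint P₂) (h2idem : P₂ * P₂ = P₂)
    (hnorm : ‖P₁ * P₂‖ < 1)
    (r : ℝ) (hr : r ∈ Set.Ioo (0 : ℝ) 1) :
    ‖(1 - r) • P₁ + r • P₂‖ < 1 := by
  obtain ⟨hr0, hr1⟩ := hr
  set Q : H →L[ℝ] H := (1 - r) • P₁ + r • P₂ with hQdef
  have hQsa : IsSelfAdjoint Q := by
    rw [hQdef, IsSelfAdjoint, star_add, star_smul, star_smul, h1sa.star_eq, h2sa.star_eq,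
      star_trivial, star_trivial]
  have hQ2 : Q * Q = ((1 - r) ^ 2) • P₁ + (r ^ 2) • P₂
      + (r * (1 - r)) • (P₁ * P₂) + (r * (1 - r)) • (P₂ * P₁) := by
    rw [hQdef]
    simp only [add_mul, mul_add, smul_mul_assoc, mul_smul_comm, smul_smul, h1idem, h2idem]
    match_scalars <;> ring
  have hP1 : ‖P₁‖ ≤ 1 := by
    have h1 := CStarRing.norm_star_mul_self (x := P₁)
    rw [h1sa.star_eq, h1idem] at h1
    nlinarith [norm_nonneg P₁]
  have hP2 : ‖P₂‖ ≤ 1 := by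
    have h1 := CStarRing.norm_star_mul_self (x := P₂)
    rw [h2sa.star_eq, h2idem] at h1
    nlinarith [norm_nonneg P₂]
  have h21 : ‖P₂ * P₁‖ = ‖P₁ * P₂‖ := by
    rw [← norm_star (P₁ * P₂), star_mul, h1sa.star_eq, h2sa.star_eq]
  have hrr : (0:ℝ) ≤ r * (1 - r) := by nlinarith
  have e1 : ‖((1 - r) ^ 2) • P₁‖ ≤ (1 - r) ^ 2 := by
    refine le_trans (ContinuousLinearMap.opNorm_smul_le _ _) ?_
    rw [Real.norm_eq_abs, abs_of_nonneg (sq_nonneg _)]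
    exact mul_le_of_le_one_right (sq_nonneg _) hP1
  have e2 : ‖(r ^ 2) • P₂‖ ≤ r ^ 2 := by
    refine le_trans (ContinuousLinearMap.opNorm_smul_le _ _) ?_
    rw [Real.norm_eq_abs, abs_of_nonneg (sq_nonneg _)]
    exact mul_le_of_le_one_right (sq_nonneg _) hP2
  have e3 : ‖(r * (1 - r)) • (P₁ * P₂)‖ ≤ r * (1 - r) * ‖P₁ * P₂‖ := by
    refine le_trans (ContinuousLinearMap.opNorm_smul_le _ _) ?_
    rw [Real.norm_eq_abs, abs_of_nonneg hrr]
  have e4 : ‖(r * (1 - r)) • (P₂ * P₁)‖ ≤ r * (1 - r) * ‖P₁ * P₂‖ := by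
    refine le_trans (ContinuousLinearMap.opNorm_smul_le _ _) ?_
    rw [Real.norm_eq_abs, abs_of_nonneg hrr, h21]
  have hQQ : ‖Q * Q‖ ≤ (1 - r) ^ 2 + r ^ 2 + r * (1 - r) * ‖P₁ * P₂‖
      + r * (1 - r) * ‖P₁ * P₂‖ := by
    rw [hQ2]
    exact le_trans (norm_add_le _ _)
      (add_le_add (le_trans (norm_add_le _ _)
        (add_le_add (le_trans (norm_add_le _ _) (add_le_add e1 e2)) e3)) e4)
  have hnormsq : ‖Q‖ * ‖Q‖ = ‖Q * Q‖ := by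
    have := CStarRing.norm_star_mul_self (x := Q)
    rw [hQsa.star_eq] at this
    exact this.symm
  have hd0 : (0:ℝ) ≤ ‖P₁ * P₂‖ := norm_nonneg _
  have key : (0:ℝ) < r * (1 - r) * (1 - ‖P₁ * P₂‖) :=
    mul_pos (mul_pos hr0 (by linarith)) (by linarith)
  have hlt : ‖Q‖ * ‖Q‖ < 1 := by nlinarith
  nlinarith [norm_nonneg Q, sq_nonneg (‖Q‖ - 1)]


theorem stmt19 {H : Type*} [NormedAddCommGroup H] [InnerProductSpace ℝ H] [CompleteSpace H]
    (P₁ P₂ : H →L[ℝ] H)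
    (h1sa : IsSelfAdjoint P₁) (h1idem : P₁ * P₁ = P₁)
    (h2sa : IsSelfAdjoint P₂) (h2idem : P₂ * P₂ = P₂)
    (hnorm : ‖P₁ * P₂‖ < 1)
    (r : ℝ) (hr : r ∈ Set.Ioo (0 : ℝ) 1) :
    IsUnit (1 - P₁ * P₂) ∧ IsUnit (1 - P₂ * P₁) ∧
    IsUnit (1 - ((1 - r) • P₁ + r • P₂)) ∧
    ∀ f : H,
      VD P₁ P₂ f =
        ⟪f, ((1 + Ring.inverse (1 - P₁ * P₂) * (P₁ + P₁ * P₂)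
            + Ring.inverse (1 - P₂ * P₁) * (P₂ + P₂ * P₁)) : H →L[ℝ] H) f⟫ ∧
      VR P₁ P₂ r f =
        ⟪f, (((2 : ℝ) • Ring.inverse (1 - ((1 - r) • P₁ + r • P₂)) - 1) : H →L[ℝ] H) f⟫ := by
  obtain ⟨hr0, hr1⟩ := hr
  have hB : ‖P₂ * P₁‖ < 1 := by
    rwa [← norm_star (P₁ * P₂), star_mul, h1sa.star_eq, h2sa.star_eq] at hnorm
  have hQ : ‖(1 - r) • P₁ + r • P₂‖ < 1 :=
    aux_Qnorm P₁ P₂ h1sa h1idem h2sa h2idem hnorm r ⟨hr0, hr1⟩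
  set Q : H →L[ℝ] H := (1 - r) • P₁ + r • P₂ with hQdef
  have hQu : IsUnit (1 - Q) := isUnit_one_sub_of_norm_lt_one hQ
  refine ⟨isUnit_one_sub_of_norm_lt_one hnorm, isUnit_one_sub_of_norm_lt_one hB, hQu,
    fun f => ⟨?_, ?_⟩⟩
  · rw [VD]
    have e1 : ∑' s : ℕ, ⟪f, ((P₁ * P₂) ^ s * P₁) f⟫
        = ⟪f, (Ring.inverse (1 - P₁ * P₂)) (P₁ f)⟫ := by
      simp only [ContinuousLinearMap.mul_apply]
      exact aux_tsum (P₁ * P₂) hnorm f (P₁ f)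
    have e2 : ∑' s : ℕ, ⟪f, ((P₁ * P₂) ^ (s + 1)) f⟫
        = ⟪f, (Ring.inverse (1 - P₁ * P₂)) ((P₁ * P₂) f)⟫ := by
      simp only [pow_succ, ContinuousLinearMap.mul_apply]
      exact aux_tsum (P₁ * P₂) hnorm f ((P₁ * P₂) f)
    have e3 : ∑' s : ℕ, ⟪f, ((P₂ * P₁) ^ s * P₂) f⟫
        = ⟪f, (Ring.inverse (1 - P₂ * P₁)) (P₂ f)⟫ := by
      simp only [ContinuousLinearMap.mul_apply]
      exact aux_tsum (P₂ * P₁) hB f (P₂ f)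
    have e4 : ∑' s : ℕ, ⟪f, ((P₂ * P₁) ^ (s + 1)) f⟫
        = ⟪f, (Ring.inverse (1 - P₂ * P₁)) ((P₂ * P₁) f)⟫ := by
      simp only [pow_succ, ContinuousLinearMap.mul_apply]
      exact aux_tsum (P₂ * P₁) hB f ((P₂ * P₁) f)
    rw [e1, e2, e3, e4]
    simp only [ContinuousLinearMap.add_apply, ContinuousLinearMap.one_apply,
      ContinuousLinearMap.mul_apply, map_add, inner_add_right,
      real_inner_self_eq_norm_sq]
    ring
  · rw [VR]
    have e : ∑' t : ℕ, ⟪f, (Q ^ (t + 1)) f⟫ = ⟪f, (Ring.inverse (1 - Q)) (Q f)⟫ := by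
      simp only [pow_succ, ContinuousLinearMap.mul_apply]
      exact aux_tsum Q hQ f (Q f)
    rw [e]
    have hmulq : Ring.inverse (1 - Q) * Q = Ring.inverse (1 - Q) - 1 := by
      have h := Ring.inverse_mul_cancel (1 - Q) hQu
      rw [mul_sub, mul_one, sub_eq_iff_eq_add] at h
      conv_rhs => rw [h]
      rw [add_sub_cancel_left]
    have e2 : (Ring.inverse (1 - Q)) (Q f) = (Ring.inverse (1 - Q) - 1) f := by
      rw [← hmulq]; rfl
    rw [e2]
    simp only [ContinuousLinearMap.sub_apply, ContinuousLinearMap.smul_apply,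
      ContinuousLinearMap.one_apply, inner_sub_right, inner_smul_right,
      real_inner_self_eq_norm_sq]
    ring
end
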